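/- Let a, b, p, q be complex numbers with p ≠ 0, q ≠ 0 and p² − 4q ≠ 0, let r, t be integers with u_r ≠ 0, and let n be a non-negative integer. Then Σ_{j=0}^{n} q^{rj} w_{r(n−2j)+t} = w_t · Σ_{j=0}^{n} v_r^j v_{r(n−j)} / 2^{j+1}, and the common value of these two sums equals ( w_{t+1+r(n+1)} − q^{r(n+1)} w_{t+1−r(n+1)} − q·( w_{t−1+r(n+1)} − q^{r(n+1)} w_{t−1−r(n+1)} ) ) / (u_r·(p² − 4q)). -/

import Mathlib

open Finset

/-- Horadam sequence `w n (a,b;p,q)` for natural indices. -/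
def horadamAux (a b p q : ℂ) : ℕ → ℂ
  | 0 => a
  | 1 => b
  | n + 2 => p * horadamAux a b p q (n + 1) - q * horadamAux a b p q n

/-- Horadam sequence at negative indices: `horadamNegAux a b p q n = w (-n)`,
defined via the backward recurrence `w (n-2) = (p * w (n-1) - w n) / q`. -/
noncomputable def horadamNegAux (a b p q : ℂ) : ℕ → ℂ
  | 0 => a
  | 1 => (p * a - b) / q
  | n + 2 => (p * horadamNegAux a b p q (n + 1) - horadamNegAux a b p q n) / q

/-- Horadam sequence `w n (a,b;p,q)` for integer indices. -/
noncomputable def horadam (a b p q : ℂ) (n : ℤ) : ℂ :=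
  if 0 ≤ n then horadamAux a b p q n.toNat else horadamNegAux a b p q n.natAbs

/-!
Let `α, β` be the roots of `x² - p x + q`, distinct since `p² - 4q ≠ 0`, and nonzero since
`q ≠ 0`. Binet's formula `w_m = A α^m + B β^m` holds at all integer indices, and
`v_m = α^m + β^m`, `u_m = (α^m - β^m) / (α - β)`. With `x = α^r` and `y = β^r`, which are
distinct because `u_r ≠ 0`, the weight `q^{rj} = (xy)^j` turns the first sum into
`w_t · Σ_j x^j y^{n-j}`. Writing `v_r / 2` as the midpoint of `x` and `y`, the second sum
telescopes to the same geometric sum, while `w_{m+k} - q^k w_{m-k} = (α^k - β^k)(A α^m - B β^m)`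
turns the closed form into `w_t (x^{n+1} - y^{n+1}) / (x - y)`.
-/

section Field

variable {K : Type*} [Field K]

theorem zpow_mul_natCast_sub (x : K) (r : ℤ) {n j : ℕ} (hj : j ≤ n) :
    x ^ (r * ((n : ℤ) - j)) = (x ^ r) ^ (n - j) := by
  rw [zpow_mul, ← Nat.cast_sub hj, zpow_natCast]

theorem mul_zpow_mul_zpow_sub_two_mul {x : K} (hx : x ≠ 0) (y : K) (r t : ℤ) {n j : ℕ}
    (hj : j ≤ n) :
    (x * y) ^ (r * j) * x ^ (r * ((n : ℤ) - 2 * j) + t)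
      = x ^ t * ((x ^ r) ^ (n - j) * (y ^ r) ^ j) := by
  have hx' : x ^ (r * j) * x ^ (r * ((n : ℤ) - 2 * j) + t)
      = x ^ t * x ^ (r * ((n : ℤ) - j)) := by
    rw [← zpow_add₀ hx, ← zpow_add₀ hx]
    ring_nf
  rw [mul_zpow, mul_right_comm, hx', zpow_mul_natCast_sub x r hj, zpow_mul, zpow_natCast]
  ring

/-- The sum telescopes once `s + u` is written as twice the midpoint `m` of `s` and `u`:
`(s - u) / 2 = m - u = s - m`. -/
theorem sum_range_add_pow_mul_div_two_pow (h2 : (2 : K) ≠ 0) {s u : K} (hsu : s ≠ u) (n : ℕ) :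
    ∑ j ∈ range (n + 1), (s + u) ^ j * (s ^ (n - j) + u ^ (n - j)) / 2 ^ (j + 1)
      = ∑ j ∈ range (n + 1), s ^ j * u ^ (n - j) := by
  set m := (s + u) / 2
  have geom (x y : K) : (∑ j ∈ range (n + 1), x ^ j * y ^ (n - j)) * (x - y)
      = x ^ (n + 1) - y ^ (n + 1) := by
    simpa using geom_sum₂_mul x y (n + 1)
  have telescope :
      (∑ j ∈ range (n + 1), (s + u) ^ j * (s ^ (n - j) + u ^ (n - j)) / 2 ^ (j + 1)) * (s - u)
      = (∑ j ∈ range (n + 1), m ^ j * u ^ (n - j)) * (m - u)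
        - (∑ j ∈ range (n + 1), m ^ j * s ^ (n - j)) * (m - s) := by
    simp only [sum_mul, ← sum_sub_distrib]
    refine sum_congr rfl fun j _ => ?_
    simp only [m, div_pow]
    field_simp
    ring
  apply mul_right_cancel₀ (sub_ne_zero.2 hsu)
  rw [telescope, geom, geom, geom]
  ring

end Field

section Binet

variable {K : Type*} [Field K] {A B α β : K}

def binet (A B α β : K) (m : ℤ) : K :=
  A * α ^ m + B * β ^ m

theorem sum_zpow_mul_binet (hα : α ≠ 0) (hβ : β ≠ 0) (r t : ℤ) (n : ℕ) :
    ∑ j ∈ range (n + 1),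
        (α * β) ^ (r * (j : ℤ)) * binet A B α β (r * ((n : ℤ) - 2 * j) + t)
      = binet A B α β t * ∑ j ∈ range (n + 1), (α ^ r) ^ j * (β ^ r) ^ (n - j) := by
  have reflect : ∑ j ∈ range (n + 1), (α ^ r) ^ (n - j) * (β ^ r) ^ j
      = ∑ j ∈ range (n + 1), (α ^ r) ^ j * (β ^ r) ^ (n - j) := by
    simpa [mul_comm] using geom_sum₂_comm (β ^ r) (α ^ r) (n + 1)
  have termwise : ∀ j ∈ range (n + 1),
      (α * β) ^ (r * (j : ℤ)) * binet A B α β (r * ((n : ℤ) - 2 * j) + t)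
        = A * α ^ t * ((α ^ r) ^ (n - j) * (β ^ r) ^ j)
          + B * β ^ t * ((α ^ r) ^ j * (β ^ r) ^ (n - j)) := by
    intro j hj
    have hjn : j ≤ n := Nat.lt_succ_iff.1 (mem_range.1 hj)
    have eα := mul_zpow_mul_zpow_sub_two_mul hα β r t hjn
    have eβ := mul_zpow_mul_zpow_sub_two_mul hβ α r t hjn
    rw [mul_comm β α] at eβ
    simp only [binet]
    linear_combination A * eα + B * eβ
  rw [sum_congr rfl termwise, sum_add_distrib, ← mul_sum, ← mul_sum, reflect, binet]
  ring

theorem binet_add_sub_zpow_mul_binet_sub (hα : α ≠ 0) (hβ : β ≠ 0) (m k : ℤ) :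
    binet A B α β (m + k) - (α * β) ^ k * binet A B α β (m - k)
      = (α ^ k - β ^ k) * binet A (-B) α β m := by
  simp only [binet, zpow_add₀ hα, zpow_add₀ hβ, zpow_sub₀ hα, zpow_sub₀ hβ, mul_zpow]
  field_simp
  ring

theorem binet_closed_form_numerator (hα : α ≠ 0) (hβ : β ≠ 0) (t k : ℤ) :
    binet A B α β (t + 1 + k) - (α * β) ^ k * binet A B α β (t + 1 - k)
        - α * β * (binet A B α β (t - 1 + k) - (α * β) ^ k * binet A B α β (t - 1 - k))
      = (α ^ k - β ^ k) * (α - β) * binet A B α β t := by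
  have shift_one := binet_add_sub_zpow_mul_binet_sub (A := A) (B := -B) hα hβ t 1
  rw [zpow_one, zpow_one, zpow_one, neg_neg] at shift_one
  rw [binet_add_sub_zpow_mul_binet_sub hα hβ, binet_add_sub_zpow_mul_binet_sub hα hβ]
  linear_combination (α ^ k - β ^ k) * shift_one

end Binet

section Horadam

variable {a b α β A B : ℂ}

theorem horadamAux_eq_mul_pow_add_mul_pow (h0 : A + B = a) (h1 : A * α + B * β = b) (k : ℕ) :
    horadamAux a b (α + β) (α * β) k = A * α ^ k + B * β ^ k := by
  induction k using Nat.twoStepInduction with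
  | zero => simpa [horadamAux] using h0.symm
  | one => simpa [horadamAux] using h1.symm
  | more k ih₀ ih₁ =>
    rw [horadamAux, ih₀, ih₁]
    ring

theorem horadamNegAux_eq_horadamAux (a b p q : ℂ) :
    horadamNegAux a b p q = horadamAux a ((p * a - b) / q) (p / q) q⁻¹ := by
  funext k
  induction k using Nat.twoStepInduction with
  | zero => rfl
  | one => rfl
  | more k ih₀ ih₁ =>
    rw [horadamNegAux, horadamAux, ih₀, ih₁]
    ring

theorem horadam_eq_binet (hα : α ≠ 0) (hβ : β ≠ 0) (h0 : A + B = a)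
    (h1 : A * α + B * β = b) :
    horadam a b (α + β) (α * β) = binet A B α β := by
  funext n
  unfold horadam binet
  split_ifs with hn
  · rw [horadamAux_eq_mul_pow_add_mul_pow h0 h1, ← zpow_natCast, ← zpow_natCast,
      Int.toNat_of_nonneg hn]
  · have h1' : A * α⁻¹ + B * β⁻¹ = ((α + β) * a - b) / (α * β) := by
      rw [← h0, ← h1]
      field_simp
      ring
    have hp' : (α + β) / (α * β) = α⁻¹ + β⁻¹ := by
      field_simp
      ring
    rw [horadamNegAux_eq_horadamAux, ← h1', hp', mul_inv,
      horadamAux_eq_mul_pow_add_mul_pow h0 rfl, inv_pow, inv_pow, ← zpow_natCast,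
      ← zpow_natCast, ← zpow_neg, ← zpow_neg,
      show -((n.natAbs : ℕ) : ℤ) = n by omega]

end Horadam

theorem exists_add_eq_mul_eq (p q : ℂ) :
    ∃ α β : ℂ, α + β = p ∧ α * β = q ∧ (α - β) ^ 2 = p ^ 2 - 4 * q := by
  obtain ⟨d, hd⟩ := IsAlgClosed.exists_pow_nat_eq (p ^ 2 - 4 * q) two_pos
  exact ⟨(p + d) / 2, (p - d) / 2, by ring, by linear_combination (-1 / 4 : ℂ) * hd, by
    linear_combination hd⟩

theorem horadam_thm1_general (a b p q : ℂ) (hq : q ≠ 0) (hD : p ^ 2 - 4 * q ≠ 0)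
    (r t : ℤ) (hu : horadam 0 1 p q r ≠ 0) (n : ℕ) :
    (∑ j ∈ Finset.range (n + 1),
        q ^ (r * (j : ℤ)) * horadam a b p q (r * ((n : ℤ) - 2 * j) + t)
      = horadam a b p q t
          * ∑ j ∈ Finset.range (n + 1),
              horadam 2 p p q r ^ j * horadam 2 p p q (r * ((n : ℤ) - j)) / 2 ^ (j + 1)) ∧
    (∑ j ∈ Finset.range (n + 1),
        q ^ (r * (j : ℤ)) * horadam a b p q (r * ((n : ℤ) - 2 * j) + t)
      = (horadam a b p q (t + 1 + r * ((n : ℤ) + 1))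
          - q ^ (r * ((n : ℤ) + 1)) * horadam a b p q (t + 1 - r * ((n : ℤ) + 1))
          - q * (horadam a b p q (t - 1 + r * ((n : ℤ) + 1))
            - q ^ (r * ((n : ℤ) + 1)) * horadam a b p q (t - 1 - r * ((n : ℤ) + 1))))
        / (horadam 0 1 p q r * (p ^ 2 - 4 * q))) := by
  obtain ⟨α, β, rfl, rfl, hΔ⟩ := exists_add_eq_mul_eq p q
  have hα : α ≠ 0 := left_ne_zero_of_mul hq
  have hβ : β ≠ 0 := right_ne_zero_of_mul hq
  have hαβ : α - β ≠ 0 := fun h => hD (by rw [← hΔ, h, zero_pow two_ne_zero])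
  have hw : horadam a b (α + β) (α * β)
      = binet ((b - a * β) / (α - β)) ((a * α - b) / (α - β)) α β :=
    horadam_eq_binet hα hβ (by field_simp; ring) (by field_simp; ring)
  have hv : horadam 2 (α + β) (α + β) (α * β) = binet 1 1 α β :=
    horadam_eq_binet hα hβ (by norm_num) (by ring)
  have hu_r : horadam 0 1 (α + β) (α * β) r = (α ^ r - β ^ r) / (α - β) := by
    rw [horadam_eq_binet (A := (α - β)⁻¹) (B := -(α - β)⁻¹) hα hβ (by ring)
      (by field_simp; ring), binet]
    ring
  have hxy : α ^ r ≠ β ^ r := fun h => hu (by rw [hu_r, h, sub_self, zero_div])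
  have geom : ∑ j ∈ range (n + 1), (α ^ r) ^ j * (β ^ r) ^ (n - j)
      = ((α ^ r) ^ (n + 1) - (β ^ r) ^ (n + 1)) / (α ^ r - β ^ r) := by
    simpa using geom₂_sum hxy (n + 1)
  rw [hw, hv, sum_zpow_mul_binet hα hβ]
  constructor
  · rw [← sum_range_add_pow_mul_div_two_pow two_ne_zero hxy]
    refine congrArg _ (sum_congr rfl fun j hj => ?_)
    have hjn : j ≤ n := Nat.lt_succ_iff.1 (mem_range.1 hj)
    simp only [binet, one_mul, zpow_mul_natCast_sub _ r hjn]
  · rw [binet_closed_form_numerator hα hβ, hu_r, ← hΔ, geom, ← zpow_natCast,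
      ← zpow_natCast, ← zpow_mul, ← zpow_mul, Nat.cast_add_one, mul_comm r]
    field_simp [sub_ne_zero.2 hxy]

theorem horadam_thm1 (a b p q : ℂ) (hp : p ≠ 0) (hq : q ≠ 0) (hD : p ^ 2 - 4 * q ≠ 0)
    (r t : ℤ) (hu : horadam 0 1 p q r ≠ 0) (n : ℕ) :
    (∑ j ∈ Finset.range (n + 1),
        q ^ (r * (j : ℤ)) * horadam a b p q (r * ((n : ℤ) - 2 * j) + t)
      = horadam a b p q t
          * ∑ j ∈ Finset.range (n + 1),
              horadam 2 p p q r ^ j * horadam 2 p p q (r * ((n : ℤ) - j)) / 2 ^ (j + 1)) ∧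
    (∑ j ∈ Finset.range (n + 1),
        q ^ (r * (j : ℤ)) * horadam a b p q (r * ((n : ℤ) - 2 * j) + t)
      = (horadam a b p q (t + 1 + r * ((n : ℤ) + 1))
          - q ^ (r * ((n : ℤ) + 1)) * horadam a b p q (t + 1 - r * ((n : ℤ) + 1))
          - q * (horadam a b p q (t - 1 + r * ((n : ℤ) + 1))
            - q ^ (r * ((n : ℤ) + 1)) * horadam a b p q (t - 1 - r * ((n : ℤ) + 1))))
        / (horadam 0 1 p q r * (p ^ 2 - 4 * q))) :=
  horadam_thm1_general a b p q hq hD r t hu n
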